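/- For d ≥ 0 let b(d) be the number of closed Mockingbird terms of degree d that are minimal elements for ≼ (i.e., the only term t' with t' ⇒ t is t itself). Then b(0) = 1, b(1) = 1, and for all d ≥ 2, b(d) = Σ_{i=0}^{d−1} b(i)·b(d−1−i) − c(d), where c(d) = b((d−1)/2) if d is odd and c(d) = 0 if d is even. -/

import Mathlib

/-- Mockingbird terms: the constant `M`, variables `x i`, and applications. -/
inductive MTerm : Type
  | M : MTerm
  | var : ℕ → MTerm
  | app : MTerm → MTerm → MTerm
  deriving DecidableEq

/-- The one-step rewrite relation `⇒` on Mockingbird terms. -/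
inductive Step : MTerm → MTerm → Prop
  | mock (t : MTerm) : Step (MTerm.app MTerm.M t) (MTerm.app t t)
  | left {t1 t1' : MTerm} (t2 : MTerm) :
      Step t1 t1' → Step (MTerm.app t1 t2) (MTerm.app t1' t2)
  | right (t1 : MTerm) {t2 t2' : MTerm} :
      Step t2 t2' → Step (MTerm.app t1 t2) (MTerm.app t1 t2')

/-- `≼`, the reflexive-transitive closure of `⇒`. -/
def MLe : MTerm → MTerm → Prop := Relation.ReflTransGen Step

/-- `≡`, the reflexive-symmetric-transitive closure of `⇒`. -/
def MEquiv : MTerm → MTerm → Prop := Relation.EqvGen Step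

/-- Strict version of `≼`. -/
def MLt (s t : MTerm) : Prop := MLe s t ∧ s ≠ t

/-- Covering relation for `≼`. -/
def MCovBy (s t : MTerm) : Prop := MLt s t ∧ ∀ z, MLt s z → ¬ MLt z t

/-- Duplicative trees: white or black nodes with a list (forest) of children. -/
inductive DTree : Type
  | W : List DTree → DTree
  | B : List DTree → DTree

/-- The one-step relation `⋖` on duplicative forests. -/
inductive DStep : List DTree → List DTree → Prop
  | dup (g : List DTree) : DStep [DTree.W g] [DTree.B (g ++ g)]
  | white {g g' : List DTree} : DStep g g' → DStep [DTree.W g] [DTree.W g']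
  | black {g g' : List DTree} : DStep g g' → DStep [DTree.B g] [DTree.B g']
  | head {t t' : DTree} (f : List DTree) : DStep [t] [t'] → DStep (t :: f) (t' :: f)
  | tail (t : DTree) {f f' : List DTree} : DStep f f' → DStep (t :: f) (t :: f')

/-- `≪`, the reflexive-transitive closure of `⋖`. -/
def DLe : List DTree → List DTree → Prop := Relation.ReflTransGen DStep

/-- The map `fr` from Mockingbird terms to duplicative forests. -/
def fr : MTerm → List DTree
  | MTerm.M => []
  | MTerm.var _ => []
  | MTerm.app MTerm.M MTerm.M => [DTree.B []]
  | MTerm.app MTerm.M t' => [DTree.W (fr t')]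
  | MTerm.app t t' => [DTree.B (fr t ++ fr t')]

mutual
  /-- The pruning map on duplicative trees (returns a forest). -/
  def prT : DTree → List DTree
    | DTree.W g => [DTree.W (prF g)]
    | DTree.B g => prF g
  /-- The pruning map on duplicative forests. -/
  def prF : List DTree → List DTree
    | [] => []
    | t :: f => prT t ++ prF f
end

mutual
  /-- The statistic `mtStat` on duplicative trees. -/
  def mtStat : DTree → ℕ
    | DTree.W g => 2 * ml g
    | DTree.B g => ml g
  /-- Sum of `mtStat` over the trees of a forest. -/
  def mtsum : List DTree → ℕ
    | [] => 0
    | t :: f => mtStat t + mtsum f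
  /-- The statistic `ml` on duplicative forests: `1 - ℓ + Σ mtStat`. -/
  def ml : List DTree → ℕ
    | f => mtsum f + 1 - f.length
end

mutual
  /-- Number of white nodes in a duplicative tree. -/
  def whitesT : DTree → ℕ
    | DTree.W g => 1 + whitesF g
    | DTree.B g => whitesF g
  /-- Number of white nodes in a duplicative forest. -/
  def whitesF : List DTree → ℕ
    | [] => 0
    | t :: f => whitesT t + whitesF f
end

/-- Closed terms: no variables. -/
def MClosed : MTerm → Prop
  | MTerm.M => True
  | MTerm.var _ => False
  | MTerm.app a b => MClosed a ∧ MClosed b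

/-- Degree: number of applications. -/
def deg : MTerm → ℕ
  | MTerm.M => 0
  | MTerm.var _ => 0
  | MTerm.app a b => deg a + deg b + 1

/-- Subterm relation. -/
inductive Subterm : MTerm → MTerm → Prop
  | refl (t : MTerm) : Subterm t t
  | left {s a : MTerm} (b : MTerm) : Subterm s a → Subterm s (MTerm.app a b)
  | right (a : MTerm) {s b : MTerm} : Subterm s b → Subterm s (MTerm.app a b)

/-- The term `r_d`. -/
def rTerm : ℕ → MTerm
  | 0 => MTerm.M
  | d + 1 => MTerm.app MTerm.M (rTerm d)

/-- Saturated chain from `a` to `b`, given as the list of its elements. -/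
def SatChain (a b : MTerm) (c : List MTerm) : Prop :=
  List.Chain' MCovBy c ∧ c.head? = some a ∧ c.getLast? = some b

/-!
A term `a ⋆ b` is minimal exactly when `a` and `b` are and it is not of the form `t ⋆ t` with
`t ≠ M` (such a term is reached from `M ⋆ t`). Hence the minimal closed terms of degree `e + 1` are
the applications `a ⋆ b` of minimal closed terms with `deg a + deg b = e`, except the diagonal ones
`t ⋆ t`; these occur only for even `e`, and for `e ≥ 2` none of them has `t = M`.
-/

open Finset

theorem sum_antidiagonal_ite_eq {R : Type*} [AddCommMonoid R] (f : ℕ → R) (e : ℕ) :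
    ∑ ij ∈ antidiagonal e, (if ij.1 = ij.2 then f ij.1 else 0) =
      if e % 2 = 0 then f (e / 2) else 0 := by
  split_ifs with he
  · rw [sum_eq_single (e / 2, e / 2)]
    · simp
    · rintro ⟨i, j⟩ hij hne
      rw [HasAntidiagonal.mem_antidiagonal] at hij
      refine if_neg fun (h : i = j) => hne ?_
      subst h
      congr 1 <;> omega
    · intro h
      exact absurd (HasAntidiagonal.mem_antidiagonal.mpr (by dsimp only; omega)) h
  · refine sum_eq_zero fun ij hij => if_neg fun h => he ?_
    rw [HasAntidiagonal.mem_antidiagonal, h] at hij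
    omega

namespace MTerm

def IsMinimal (t : MTerm) : Prop := ∀ t', Step t' t → t' = t

theorem isMinimal_M : IsMinimal M := fun _ h => nomatch h

theorem isMinimal_app_iff {a b : MTerm} :
    IsMinimal (app a b) ↔ IsMinimal a ∧ IsMinimal b ∧ (a = b → a = M) := by
  constructor
  · intro h
    refine ⟨fun a' ha => ?_, fun b' hb => ?_, ?_⟩
    · simpa using h _ (Step.left b ha)
    · simpa using h _ (Step.right a hb)
    · rintro rfl
      simpa [eq_comm] using h _ (Step.mock a)
  · rintro ⟨ha, hb, hab⟩ t' h
    cases h with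
    | mock => rw [hab rfl]
    | left _ h => rw [ha _ h]
    | right _ h => rw [hb _ h]

def closedMinimals : ℕ → Finset MTerm
  | 0 => {M}
  | e + 1 =>
    ((antidiagonal e).attach.biUnion fun ij =>
      (closedMinimals ij.1.1 ×ˢ closedMinimals ij.1.2).filter fun p => p.1 = p.2 → p.1 = M).image
      fun p => app p.1 p.2
decreasing_by all_goals (have := mem_antidiagonal.mp ij.2; omega)

theorem mem_closedMinimals {d : ℕ} {t : MTerm} :
    t ∈ closedMinimals d ↔ MClosed t ∧ deg t = d ∧ IsMinimal t := by
  induction t generalizing d with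
  | M => cases d <;> simp [closedMinimals, MClosed, deg, isMinimal_M]
  | var n => cases d <;> simp [closedMinimals, MClosed]
  | app a b iha ihb =>
    cases d with
    | zero => simp [closedMinimals, deg]
    | succ e =>
      simp [closedMinimals, iha, ihb, isMinimal_app_iff, MClosed, deg, and_assoc, and_left_comm]

theorem deg_of_mem_closedMinimals {d : ℕ} {t : MTerm} (h : t ∈ closedMinimals d) : deg t = d :=
  (mem_closedMinimals.mp h).2.1

theorem coe_closedMinimals (d : ℕ) :
    (closedMinimals d : Set MTerm) = {t | MClosed t ∧ deg t = d ∧ IsMinimal t} := by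
  ext t
  exact mem_closedMinimals

theorem card_closedMinimals_succ (e : ℕ) :
    #(closedMinimals (e + 1)) = ∑ ij ∈ antidiagonal e,
      #((closedMinimals ij.1 ×ˢ closedMinimals ij.2).filter fun p => p.1 = p.2 → p.1 = M) := by
  have app_injective : Function.Injective fun p : MTerm × MTerm => app p.1 p.2 :=
    fun p q h => Prod.ext (app.inj h).1 (app.inj h).2
  rw [closedMinimals, card_image_of_injective _ app_injective, card_biUnion]
  · exact sum_attach (antidiagonal e) fun ij =>
      #((closedMinimals ij.1 ×ˢ closedMinimals ij.2).filter fun p => p.1 = p.2 → p.1 = M)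
  · rintro ⟨⟨i, j⟩, hij⟩ - ⟨⟨i', j'⟩, hij'⟩ - hne
    have hi : i ≠ i' := by
      rintro rfl
      rw [HasAntidiagonal.mem_antidiagonal] at hij hij'
      exact hne (Subtype.ext (Prod.ext rfl (by dsimp only; omega)))
    refine disjoint_filter_filter (disjoint_product.mpr (Or.inl ?_))
    exact disjoint_left.mpr fun t ht ht' =>
      hi ((deg_of_mem_closedMinimals ht).symm.trans (deg_of_mem_closedMinimals ht'))

theorem card_filter_product_closedMinimals {i j : ℕ} (hij : 0 < i + j) :
    (#((closedMinimals i ×ˢ closedMinimals j).filter fun p => p.1 = p.2 → p.1 = M) : ℤ) =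
      #(closedMinimals i) * #(closedMinimals j)
        - if i = j then (#(closedMinimals i) : ℤ) else 0 := by
  split_ifs with h
  · subst h
    have hoffDiag : ((closedMinimals i ×ˢ closedMinimals i).filter fun p => p.1 = p.2 → p.1 = M) =
        (closedMinimals i).offDiag := by
      have hM : M ∉ closedMinimals i := fun hM => by
        have := deg_of_mem_closedMinimals hM
        rw [deg] at this
        omega
      ext ⟨a, b⟩
      simp only [mem_filter, mem_product, mem_offDiag]
      constructor
      · rintro ⟨⟨ha, hb⟩, hab⟩
        exact ⟨ha, hb, fun h => hM (hab h ▸ ha)⟩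
      · rintro ⟨ha, hb, hab⟩
        exact ⟨⟨ha, hb⟩, fun h => absurd h hab⟩
    rw [hoffDiag, offDiag_card, Nat.cast_sub (Nat.le_mul_self _)]
    push_cast
    ring
  · rw [filter_true_of_mem, card_product]
    · push_cast
      ring
    · rintro ⟨a, b⟩ hab (rfl : a = b)
      rw [mem_product] at hab
      exact absurd ((deg_of_mem_closedMinimals hab.1).symm.trans
        (deg_of_mem_closedMinimals hab.2)) h

theorem card_closedMinimals_zero : #(closedMinimals 0) = 1 := by
  rw [closedMinimals, card_singleton]

theorem card_closedMinimals_one : #(closedMinimals 1) = 1 := by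
  rw [card_closedMinimals_succ, Nat.antidiagonal_zero, sum_singleton]
  simp only [closedMinimals, singleton_product_singleton, filter_singleton]
  rw [if_pos id, card_singleton]

theorem card_closedMinimals_eq_sum {d : ℕ} (hd : 2 ≤ d) :
    (#(closedMinimals d) : ℤ) =
      (∑ i ∈ range d, (#(closedMinimals i) : ℤ) * #(closedMinimals (d - 1 - i)))
        - if d % 2 = 1 then (#(closedMinimals ((d - 1) / 2)) : ℤ) else 0 := by
  obtain ⟨e, rfl⟩ : ∃ e, d = e + 1 := ⟨d - 1, by omega⟩
  rw [card_closedMinimals_succ, Nat.cast_sum]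
  rw [sum_congr rfl fun ij hij => card_filter_product_closedMinimals
    (by rw [HasAntidiagonal.mem_antidiagonal.mp hij]; omega)]
  rw [sum_sub_distrib, sum_antidiagonal_ite_eq fun i => (#(closedMinimals i) : ℤ),
    Nat.sum_antidiagonal_eq_sum_range_succ_mk]
  simp only [Nat.add_sub_cancel, Nat.succ_mod_two_eq_one_iff]

end MTerm

/-- recurrence for the number `b d` of closed minimal terms of degree `d`. -/
theorem count_minimal_closed_terms (b : ℕ → ℕ)
    (hb : ∀ d, b d =
      Set.ncard {t : MTerm | MClosed t ∧ deg t = d ∧ ∀ t', Step t' t → t' = t}) :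
    b 0 = 1 ∧ b 1 = 1 ∧
    ∀ d, 2 ≤ d →
      (b d : ℤ) = (∑ i ∈ Finset.range d, (b i : ℤ) * (b (d - 1 - i) : ℤ))
        - (if d % 2 = 1 then (b ((d - 1) / 2) : ℤ) else 0) := by
  have hb' : ∀ d, b d = #(MTerm.closedMinimals d) := fun d => by
    rw [hb, ← Set.ncard_coe_finset, MTerm.coe_closedMinimals]
    rfl
  simp only [hb']
  exact ⟨MTerm.card_closedMinimals_zero, MTerm.card_closedMinimals_one,
    fun d hd => MTerm.card_closedMinimals_eq_sum hd⟩
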